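/- Let U be a d×d unitary and A any d×d complex matrix, and set ψ = vec(A), φ = vec(UA). Then the partial transpose of |ψ⟩⟨ψ| − |φ⟩⟨φ| factors as (id ⊗ Aᵀ) F (id − Uᵀ ⊗ U*) (id ⊗ A*), and hence has rank at most d² − d. -/

import Mathlib

open Matrix Kronecker BigOperators
open scoped ComplexOrder

noncomputable def traceNorm {n : Type*} [Fintype n] [DecidableEq n] (X : Matrix n n ℂ) : ℝ :=
  (((Matrix.posSemidef_conjTranspose_mul_self X).1.eigenvectorUnitary : Matrix n n ℂ) *
      diagonal (((↑) : ℝ → ℂ) ∘ Real.sqrt ∘ (Matrix.posSemidef_conjTranspose_mul_self X).1.eigenvalues) *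
      (star ((Matrix.posSemidef_conjTranspose_mul_self X).1.eigenvectorUnitary : Matrix n n ℂ))).trace.re

noncomputable def hsNorm {n : Type*} [Fintype n] (X : Matrix n n ℂ) : ℝ :=
  Real.sqrt ((Xᴴ * X).trace.re)

noncomputable def singularValues {n : Type*} [Fintype n] [DecidableEq n] (Y : Matrix n n ℂ) :
    n → ℝ :=
  fun i => Real.sqrt ((Matrix.posSemidef_conjTranspose_mul_self Y).1.eigenvalues i)

/-- Partial transpose on the first tensor factor. -/
def ptransp {d k : ℕ} (X : Matrix (Fin d × Fin k) (Fin d × Fin k) ℂ) :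
    Matrix (Fin d × Fin k) (Fin d × Fin k) ℂ :=
  fun p q => X (q.1, p.2) (p.1, q.2)

/-- Partial trace over the first tensor factor. -/
noncomputable def ptraceH {d k : ℕ} (X : Matrix (Fin d × Fin k) (Fin d × Fin k) ℂ) :
    Matrix (Fin k) (Fin k) ℂ :=
  fun j j' => ∑ i, X (i, j) (i, j')

def vec {d : ℕ} (A : Matrix (Fin d) (Fin d) ℂ) : Fin d × Fin d → ℂ := fun p => A p.1 p.2

/-- Outer product |v⟩⟨w|. -/
def outer {n : Type*} (v w : n → ℂ) : Matrix n n ℂ := fun i j => v i * star (w j)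

/-- The swap operator F(e_i ⊗ e_j) = e_j ⊗ e_i. -/
def swapOp (d : ℕ) : Matrix (Fin d × Fin d) (Fin d × Fin d) ℂ :=
  fun p q => if p.1 = q.2 ∧ p.2 = q.1 then 1 else 0

/-- Blockwise action of Φ ⊗ id on operators on H ⊗ K. -/
def tensorExt {d k : ℕ} (Φ : Matrix (Fin d) (Fin d) ℂ → Matrix (Fin d) (Fin d) ℂ)
    (Z : Matrix (Fin d × Fin k) (Fin d × Fin k) ℂ) :
    Matrix (Fin d × Fin k) (Fin d × Fin k) ℂ :=
  fun p q => Φ (fun a b => Z (a, p.2) (b, q.2)) p.1 q.1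

/-- Diamond norm (stabilized at ancilla dimension d). -/
noncomputable def diamondNorm {d : ℕ}
    (Φ : Matrix (Fin d) (Fin d) ℂ → Matrix (Fin d) (Fin d) ℂ) : ℝ :=
  ⨆ ρ : {ρ : Matrix (Fin d × Fin d) (Fin d × Fin d) ℂ // ρ.PosSemidef ∧ ρ.trace = 1},
    traceNorm (tensorExt Φ ρ.1)

/-!
The partial transpose of `|vec A⟩⟨vec B|` is `(1 ⊗ Aᵀ) F (1 ⊗ B̄)`, and moving `1 ⊗ Uᵀ` through the
swap gives `(1 ⊗ Uᵀ) F (1 ⊗ Ū) = F (Uᵀ ⊗ Ū)`; this is the factorization. For the rank bound, a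
normal matrix is diagonalizable, `U P = P D`, because `ker N² = ker N` for normal `N`; for unitary
`U` also `Uᴴ P = P D⁻¹`, hence `(1 - U ⊗ Uᴴ)(P ⊗ P) = (P ⊗ P)(1 - D ⊗ D⁻¹)`. That diagonal matrix
vanishes at the `d` indices `(i, i)`, so it has rank at most `d² - d`, and transposing
`1 - U ⊗ Uᴴ` gives `1 - Uᵀ ⊗ Ū`.
-/

theorem ptransp_sub {d k : ℕ} (X Y : Matrix (Fin d × Fin k) (Fin d × Fin k) ℂ) :
    ptransp (X - Y) = ptransp X - ptransp Y := rfl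

theorem mul_swapOp_apply {d : ℕ} {m : Type*} (M : Matrix m (Fin d × Fin d) ℂ) (p : m)
    (q : Fin d × Fin d) : (M * swapOp d) p q = M p (q.2, q.1) := by
  simp [swapOp, mul_apply, Fintype.sum_prod_type, ite_and]

theorem swapOp_mul_apply {d : ℕ} {m : Type*} (M : Matrix (Fin d × Fin d) m ℂ)
    (p : Fin d × Fin d) (q : m) : (swapOp d * M) p q = M (p.2, p.1) q := by
  simp [swapOp, mul_apply, Fintype.sum_prod_type, ite_and]

theorem kronecker_mul_swapOp {d : ℕ} (X Y : Matrix (Fin d) (Fin d) ℂ) :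
    (X ⊗ₖ Y) * swapOp d = swapOp d * (Y ⊗ₖ X) := by
  ext p q
  simp [mul_swapOp_apply, swapOp_mul_apply, mul_comm]

theorem one_kronecker_mul_swapOp_mul_one_kronecker {d : ℕ} (X Y : Matrix (Fin d) (Fin d) ℂ) :
    ((1 : Matrix (Fin d) (Fin d) ℂ) ⊗ₖ X) * swapOp d * (1 ⊗ₖ Y) = swapOp d * (X ⊗ₖ Y) := by
  rw [kronecker_mul_swapOp, mul_assoc, ← mul_kronecker_mul, mul_one, one_mul]

theorem ptransp_outer_vec {d : ℕ} (A B : Matrix (Fin d) (Fin d) ℂ) :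
    ptransp (outer (_root_.vec A) (_root_.vec B)) =
      ((1 : Matrix (Fin d) (Fin d) ℂ) ⊗ₖ Aᵀ) * swapOp d * (1 ⊗ₖ B.map (starRingEnd ℂ)) := by
  ext ⟨i, j⟩ ⟨a, b⟩
  rw [mul_apply, Fintype.sum_prod_type]
  simp [ptransp, outer, _root_.vec, mul_swapOp_apply, one_apply]

theorem ptransp_outer_vec_sub_outer_vec_mul {d : ℕ} (U A : Matrix (Fin d) (Fin d) ℂ) :
    ptransp (outer (_root_.vec A) (_root_.vec A) -
        outer (_root_.vec (U * A)) (_root_.vec (U * A))) =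
      ((1 : Matrix (Fin d) (Fin d) ℂ) ⊗ₖ Aᵀ) * swapOp d *
        ((1 : Matrix (Fin d × Fin d) (Fin d × Fin d) ℂ) - Uᵀ ⊗ₖ U.map (starRingEnd ℂ)) *
        ((1 : Matrix (Fin d) (Fin d) ℂ) ⊗ₖ A.map (starRingEnd ℂ)) := by
  have hUA : ptransp (outer (_root_.vec (U * A)) (_root_.vec (U * A))) =
      ((1 : Matrix (Fin d) (Fin d) ℂ) ⊗ₖ Aᵀ) * (swapOp d * (Uᵀ ⊗ₖ U.map (starRingEnd ℂ))) *
        (1 ⊗ₖ A.map (starRingEnd ℂ)) := by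
    rw [ptransp_outer_vec, ← one_kronecker_mul_swapOp_mul_one_kronecker, transpose_mul,
      Matrix.map_mul, ← one_mul (1 : Matrix (Fin d) (Fin d) ℂ), mul_kronecker_mul,
      mul_kronecker_mul]
    noncomm_ring
  rw [ptransp_sub, ptransp_outer_vec, hUA]
  noncomm_ring

theorem Fintype.card_subtype_fst_ne_snd {n : Type*} [Fintype n] [DecidableEq n] :
    Fintype.card {p : n × n // p.1 ≠ p.2} = Fintype.card n ^ 2 - Fintype.card n := by
  rw [Fintype.card_subtype,
    show Finset.univ.filter (fun p : n × n => p.1 ≠ p.2) = Finset.univ.offDiag by ext; simp,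
    Finset.offDiag_card, Finset.card_univ, sq]

namespace Matrix

variable {n : Type*} [Fintype n] [DecidableEq n]

theorem rank_one_sub_kronecker_le {K : Type*} [Field K] {U V P : Matrix n n K} {g h : n → K}
    (hP : IsUnit P) (hU : U * P = P * diagonal g) (hV : V * P = P * diagonal h)
    (hgh : ∀ i, g i * h i = 1) :
    (1 - U ⊗ₖ V).rank ≤ Fintype.card n ^ 2 - Fintype.card n := by
  classical
  have hPdet := (isUnit_iff_isUnit_det P).mp hP
  have hPP : IsUnit (P ⊗ₖ P).det := by
    rw [det_kronecker]
    exact (hPdet.pow _).mul (hPdet.pow _)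
  have hsimilar : (1 - U ⊗ₖ V) * (P ⊗ₖ P) = (P ⊗ₖ P) * diagonal fun p => 1 - g p.1 * h p.2 := by
    rw [sub_mul, one_mul, ← mul_kronecker_mul, hU, hV, mul_kronecker_mul,
      diagonal_kronecker_diagonal, ← diagonal_sub (fun _ => 1), diagonal_one, mul_sub, mul_one]
  calc (1 - U ⊗ₖ V).rank
      = (diagonal fun p : n × n => 1 - g p.1 * h p.2).rank := by
        rw [← rank_mul_eq_left_of_isUnit_det _ _ hPP, hsimilar,
          rank_mul_eq_right_of_isUnit_det _ _ hPP]
    _ = Fintype.card {p : n × n // 1 - g p.1 * h p.2 ≠ 0} := rank_diagonal _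
    _ ≤ Fintype.card {p : n × n // p.1 ≠ p.2} :=
        Fintype.card_subtype_mono _ _ fun p hp hdiag => hp (by rw [← hdiag, hgh, sub_self])
    _ = Fintype.card n ^ 2 - Fintype.card n := Fintype.card_subtype_fst_ne_snd

theorem exists_isUnit_mul_eq_mul_diagonal_of_iSup_eigenspace_eq_top {K : Type*} [Field K]
    {M : Matrix n n K} (h : ⨆ μ, Module.End.eigenspace (toLin' M) μ = ⊤) :
    ∃ (P : Matrix n n K) (g : n → K), IsUnit P ∧ M * P = P * diagonal g := by
  classical
  have hint := DirectSum.isInternal_submodule_of_iSupIndep_of_iSup_eq_top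
    (Module.End.eigenspaces_iSupIndep (toLin' M)) h
  let b₀ := hint.collectedBasis fun μ => Module.finBasis K (Module.End.eigenspace (toLin' M) μ)
  let e := b₀.indexEquiv (Pi.basisFun K n)
  let b := b₀.reindex e
  refine ⟨(Pi.basisFun K n).toMatrix b, fun k => (e.symm k).1, ?_, ?_⟩
  · let _ := (Pi.basisFun K n).invertibleToMatrix b
    exact isUnit_of_invertible _
  · have hb : ∀ k, M *ᵥ b k = (e.symm k).1 • b k := fun k => by
      rw [← toLin'_apply, Module.Basis.reindex_apply]
      exact Module.End.mem_eigenspace_iff.mp (hint.collectedBasis_mem _ (e.symm k))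
    ext i k
    rw [mul_diagonal, mul_apply, mul_comm]
    simp only [Module.Basis.toMatrix_apply, Pi.basisFun_repr]
    exact congrFun (hb k) i

section StarOrderedField

variable {R : Type*} [Field R] [PartialOrder R] [StarRing R] [StarOrderedRing R]

omit [DecidableEq n] in
theorem mulVec_eq_zero_of_mulVec_mulVec_eq_zero {N : Matrix n n R} [IsStarNormal N]
    {x : n → R} (h : N *ᵥ (N *ᵥ x) = 0) : N *ᵥ x = 0 := by
  -- `ker Nᴴ = ker (N Nᴴ) = ker (Nᴴ N) = ker N`
  have hstar : Nᴴ *ᵥ (N *ᵥ x) = 0 := by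
    rw [← conjTranspose_mul_self_mulVec_eq_zero, conjTranspose_conjTranspose,
      ← star_eq_conjTranspose, ← star_comm_self', ← mulVec_mulVec, h, mulVec_zero]
  rwa [mulVec_mulVec, conjTranspose_mul_self_mulVec_eq_zero] at hstar

theorem mulVec_eq_zero_of_pow_mulVec_eq_zero {N : Matrix n n R} [IsStarNormal N]
    {x : n → R} : ∀ {k : ℕ}, (N ^ k) *ᵥ x = 0 → N *ᵥ x = 0
  | 0, h => by rw [pow_zero, one_mulVec] at h; rw [h, mulVec_zero]
  | k + 1, h => by
    rw [pow_succ, ← mulVec_mulVec] at h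
    exact mulVec_eq_zero_of_mulVec_mulVec_eq_zero (mulVec_eq_zero_of_pow_mulVec_eq_zero h)

instance isStarNormal_sub_smul_one (N : Matrix n n R) [IsStarNormal N] (μ : R) :
    IsStarNormal (N - μ • 1) :=
  have : IsStarNormal (μ • 1 : Matrix n n R) :=
    ⟨by simp [Commute, SemiconjBy, smul_smul, mul_comm]⟩
  Commute.isStarNormal_sub (by simp [Commute, SemiconjBy])

theorem maxGenEigenspace_toLin'_eq_eigenspace (N : Matrix n n R) [IsStarNormal N] (μ : R) :
    Module.End.maxGenEigenspace (toLin' N) μ = Module.End.eigenspace (toLin' N) μ := by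
  refine le_antisymm (fun x hx => ?_) Module.End.eigenspace_le_maxGenEigenspace
  obtain ⟨k, hk⟩ := (Module.End.mem_maxGenEigenspace _ _ _).mp hx
  have hpow : (toLin' N - μ • 1) ^ k = toLin' ((N - μ • 1) ^ k) := by
    rw [show toLin' N - μ • 1 = toLin' (N - μ • 1) by rw [map_sub, map_smul, toLin'_one]; rfl]
    exact (map_pow (toLinAlgEquiv' : Matrix n n R ≃ₐ[R] _) _ k).symm
  rw [hpow, toLin'_apply] at hk
  rw [Module.End.mem_eigenspace_iff, toLin'_apply, ← sub_eq_zero]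
  simpa [sub_mulVec, smul_mulVec] using mulVec_eq_zero_of_pow_mulVec_eq_zero hk

theorem iSup_eigenspace_toLin'_eq_top [IsAlgClosed R] (N : Matrix n n R) [IsStarNormal N] :
    ⨆ μ, Module.End.eigenspace (toLin' N) μ = ⊤ := by
  simpa only [maxGenEigenspace_toLin'_eq_eigenspace] using
    Module.End.iSup_maxGenEigenspace_eq_top (toLin' N)

theorem rank_one_sub_kronecker_conjTranspose_le [IsAlgClosed R] {U : Matrix n n R}
    (hU : U ∈ unitaryGroup n R) :
    (1 - U ⊗ₖ Uᴴ).rank ≤ Fintype.card n ^ 2 - Fintype.card n := by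
  have := isStarNormal_of_mem_unitary hU
  obtain ⟨P, g, hP, hUP⟩ :=
    exists_isUnit_mul_eq_mul_diagonal_of_iSup_eigenspace_eq_top (iSup_eigenspace_toLin'_eq_top U)
  have hP_eq : Uᴴ * P * diagonal g = P := by
    rw [mul_assoc, ← hUP, ← mul_assoc, ← star_eq_conjTranspose, Unitary.star_mul_self_of_mem hU,
      one_mul]
  have hg : ∀ i, g i ≠ 0 := fun i hi => by
    have hdet := congrArg det hP_eq
    rw [det_mul, det_diagonal, Finset.prod_eq_zero (Finset.mem_univ i) hi, mul_zero] at hdet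
    exact ((isUnit_iff_isUnit_det P).mp hP).ne_zero hdet.symm
  refine rank_one_sub_kronecker_le hP hUP (h := g⁻¹) ?_ fun i => mul_inv_cancel₀ (hg i)
  calc Uᴴ * P = Uᴴ * P * (diagonal g * diagonal g⁻¹) := by
        rw [diagonal_mul_diagonal, show (fun i => g i * g⁻¹ i) = fun _ => 1 from
          funext fun i => mul_inv_cancel₀ (hg i), diagonal_one, mul_one]
    _ = P * diagonal g⁻¹ := by rw [← mul_assoc, hP_eq]

theorem rank_one_sub_transpose_kronecker_map_star_le [IsAlgClosed R] {U : Matrix n n R}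
    (hU : U ∈ unitaryGroup n R) :
    (1 - Uᵀ ⊗ₖ U.map (starRingEnd R)).rank ≤ Fintype.card n ^ 2 - Fintype.card n := by
  rw [← rank_transpose, transpose_sub, transpose_one, ← kroneckerMap_transpose,
    transpose_transpose]
  exact rank_one_sub_kronecker_conjTranspose_le hU

end StarOrderedField

end Matrix

theorem ptransp_outer_diff_factorization {d : ℕ} (U A : Matrix (Fin d) (Fin d) ℂ)
    (hU : U ∈ Matrix.unitaryGroup (Fin d) ℂ) :
    ptransp (outer (_root_.vec A) (_root_.vec A) - outer (_root_.vec (U * A)) (_root_.vec (U * A))) =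
      ((1 : Matrix (Fin d) (Fin d) ℂ) ⊗ₖ Aᵀ) * swapOp d *
        ((1 : Matrix (Fin d × Fin d) (Fin d × Fin d) ℂ) - Uᵀ ⊗ₖ U.map (starRingEnd ℂ)) *
        ((1 : Matrix (Fin d) (Fin d) ℂ) ⊗ₖ A.map (starRingEnd ℂ)) ∧
    (ptransp (outer (_root_.vec A) (_root_.vec A) - outer (_root_.vec (U * A)) (_root_.vec (U * A)))).rank ≤
      d ^ 2 - d := by
  refine ⟨ptransp_outer_vec_sub_outer_vec_mul U A, ?_⟩
  rw [ptransp_outer_vec_sub_outer_vec_mul]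
  refine (rank_mul_le_left _ _).trans <| (rank_mul_le_right _ _).trans ?_
  simpa using rank_one_sub_transpose_kronecker_map_star_le hU
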